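/- arXiv:1901.05148 — 3 statements merged into one kernel-verified Lean document; each statement's English description precedes it below -/
import Mathlib

section
/- Let V₁, ..., V_{k+1} be linear subspaces of a finite-dimensional inner product space V. The map L(v) = (Π₁v, ..., Π_{k+1}v) on (⋂ᵢ Vᵢ)^⊥ is surjective onto V₁^⊥ × ⋯ × V_{k+1}^⊥ if and only if V^k = (V₁ × V₂ × ⋯ × V_k) + Δ^k V_{k+1}, where Δ^k V_{k+1} = {(v, v, ..., v) : v ∈ V_{k+1}} is the diagonal copy of V_{k+1} in V^k. -/
theorem stmt_4 {E : Type*} [NormedAddCommGroup E] [InnerProductSpace ℝ E]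
    [FiniteDimensional ℝ E] (k : ℕ) (V : Fin (k + 1) → Submodule ℝ E) :
    Function.Surjective
      (fun (v : ↥(⨅ i, V i)ᗮ) (i : Fin (k + 1)) =>
        Submodule.orthogonalProjection (V i)ᗮ (v : E)) ↔
    (∀ w : Fin k → E, ∃ (u : Fin k → E) (z : E),
      (∀ i, u i ∈ V i.castSucc) ∧ z ∈ V (Fin.last k) ∧ ∀ i, w i = u i + z) := by
  constructor
  · intro h w
    set x : Fin (k + 1) → E := Fin.snoc w 0 with hx
    obtain ⟨v, hv⟩ := h (fun i => Submodule.orthogonalProjection (V i)ᗮ (x i))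
    have hv' : ∀ i, (v : E) - x i ∈ V i := by
      intro i
      have h1 : Submodule.orthogonalProjection (V i)ᗮ ((v : E) - x i) = 0 := by
        rw [map_sub]
        have := congrFun hv i
        simp only at this
        rw [this, sub_self]
      have h2 : (v : E) - x i ∈ ((V i)ᗮ)ᗮ :=
        (Submodule.orthogonalProjectionOnto_eq_zero_iff).mp h1
      rwa [Submodule.orthogonal_orthogonal] at h2
    refine ⟨fun i => w i - v, v, ?_, ?_, ?_⟩
    · intro i
      have := hv' i.castSucc
      rw [hx, Fin.snoc_castSucc] at this
      simpa using (V i.castSucc).neg_mem this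
    · have := hv' (Fin.last k)
      rwa [hx, Fin.snoc_last, sub_zero] at this
    · intro i; exact (sub_add_cancel _ _).symm
  · intro h w
    obtain ⟨u, z, hu, hz, hw⟩ := h (fun i => (w i.castSucc : E) - (w (Fin.last k) : E))
    set v₀ : E := (w (Fin.last k) : E) + z with hv₀
    have key : ∀ i, v₀ - (w i : E) ∈ V i := by
      intro i
      induction i using Fin.lastCases with
      | last => simpa [hv₀] using hz
      | cast j =>
        have hmem : -(u j) ∈ V j.castSucc := (V j.castSucc).neg_mem (hu j)
        have h2 := eq_add_of_sub_eq (hw j)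
        have h3 : v₀ - (w j.castSucc : E) = -(u j) := by
          rw [hv₀, h2]; abel
        rw [h3]
        exact hmem
    refine ⟨Submodule.orthogonalProjection (⨅ i, V i)ᗮ v₀, ?_⟩
    funext i
    have hdiff : v₀ - (Submodule.orthogonalProjection (⨅ i, V i)ᗮ v₀ : E) ∈ V i := by
      have h1 : v₀ - (Submodule.orthogonalProjection (⨅ i, V i)ᗮ v₀ : E) ∈ ((⨅ i, V i)ᗮ)ᗮ :=
        Submodule.sub_starProjection_mem_orthogonal v₀
      rw [Submodule.orthogonal_orthogonal] at h1
      exact (iInf_le V i) h1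
    have hmem : (Submodule.orthogonalProjection (⨅ i, V i)ᗮ v₀ : E) - (w i : E) ∈ V i := by
      have : (Submodule.orthogonalProjection (⨅ i, V i)ᗮ v₀ : E) - (w i : E)
          = -(v₀ - (Submodule.orthogonalProjection (⨅ i, V i)ᗮ v₀ : E)) + (v₀ - (w i : E)) := by abel
      rw [this]
      exact (V i).add_mem ((V i).neg_mem hdiff) (key i)
    have hdecomp : (Submodule.orthogonalProjection (⨅ i, V i)ᗮ v₀ : E)
        = (w i : E) + ((Submodule.orthogonalProjection (⨅ i, V i)ᗮ v₀ : E) - (w i : E)) := by abel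
    simp only
    rw [hdecomp, map_add, Submodule.orthogonalProjectionOnto_mem_subspace_eq_self,
      Submodule.orthogonalProjectionOnto_apply_of_mem_orthogonal, add_zero]
    rwa [Submodule.orthogonal_orthogonal]
end

section
/- Let V₁, ..., V_{k+1} be linear subspaces of a finite-dimensional inner product space V. The subspaces are strongly transverse (i.e., whenever vᵢ ∈ Vᵢ^⊥ for each i and v₁ + ⋯ + v_{k+1} = 0, then all vᵢ = 0) if and only if V^k = (V₁ × ⋯ × V_k) + Δ^k V_{k+1}. -/
open Finset

theorem stmt_5 {E : Type*} [NormedAddCommGroup E] [InnerProductSpace ℝ E]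
    [FiniteDimensional ℝ E] (k : ℕ) (V : Fin (k + 1) → Submodule ℝ E) :
    (∀ v : ∀ i, ↥(V i)ᗮ, (∑ i, (v i : E)) = 0 → ∀ i, (v i : E) = 0) ↔
    (∀ w : Fin k → E, ∃ (u : Fin k → E) (z : E),
      (∀ i, u i ∈ V i.castSucc) ∧ z ∈ V (Fin.last k) ∧ ∀ i, w i = u i + z) := by
  constructor
  · intro hv w
    let F := PiLp 2 (fun _ : Fin k => E)
    let T : ((∀ i : Fin k, V i.castSucc) × V (Fin.last k)) →ₗ[ℝ] F :=
      { toFun := fun p => WithLp.toLp 2 (fun i => (p.1 i : E) + (p.2 : E))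
        map_add' := fun p q => PiLp.ext fun i => add_add_add_comm _ _ _ _
        map_smul' := fun c p => PiLp.ext fun i => (smul_add c _ _).symm }
    have hT : LinearMap.range T = ⊤ := by
      rw [← Submodule.orthogonal_eq_bot_iff, Submodule.eq_bot_iff]
      intro x hx
      rw [Submodule.mem_orthogonal] at hx
      -- each coordinate is in the orthogonal complement
      have hxj : ∀ j : Fin k, x j ∈ (V j.castSucc)ᗮ := by
        intro j
        rw [Submodule.mem_orthogonal]
        intro u hu
        have := hx (T (Pi.single j ⟨u, hu⟩, 0)) (LinearMap.mem_range_self _ _)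
        rw [PiLp.inner_apply] at this
        rw [Fintype.sum_eq_single j ?_] at this
        · simpa [T] using this
        · intro i hij
          simp [T, Pi.single_apply, hij]
      have hsum : (∑ j, x j) ∈ (V (Fin.last k))ᗮ := by
        rw [Submodule.mem_orthogonal]
        intro z hz
        have := hx (T (0, ⟨z, hz⟩)) (LinearMap.mem_range_self _ _)
        rw [PiLp.inner_apply] at this
        simpa [T, inner_sum] using this
      -- build the vector of orthogonal components
      let v : ∀ i, ↥(V i)ᗮ :=
        fun i => Fin.lastCases (motive := fun i => ↥(V i)ᗮ)
          ⟨-∑ j, x j, Submodule.neg_mem _ hsum⟩ (fun j => ⟨x j, hxj j⟩) i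
      have hv0 : (∑ i, (v i : E)) = 0 := by
        rw [Fin.sum_univ_castSucc]
        simp [v]
      have := hv v hv0
      ext j
      have hj := this j.castSucc
      simpa [v] using hj
    obtain ⟨⟨u, z⟩, hp⟩ := LinearMap.range_eq_top.mp hT ((WithLp.equiv 2 _).symm w)
    refine ⟨fun i => (u i : E), (z : E), fun i => (u i).2, z.2, fun i => ?_⟩
    have := congrFun (congrArg WithLp.ofLp hp) i
    simpa [T, WithLp.equiv] using this.symm
  · intro h v hsum
    have horth : ∀ (i) (y : E), y ∈ V i → inner (𝕜 := ℝ) ((v i : E)) y = 0 := by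
      intro i y hy
      rw [real_inner_comm]
      exact ((Submodule.mem_orthogonal _ _).mp (v i).2) y hy
    have key : ∀ w : Fin k → E,
        (∑ j : Fin k, (inner (𝕜 := ℝ) ((v j.castSucc : E)) (w j))) = 0 := by
      intro w
      obtain ⟨u, z, hu, hz, hw⟩ := h w
      have hlast : (∑ j : Fin k, (v j.castSucc : E)) = -(v (Fin.last k) : E) := by
        rw [Fin.sum_univ_castSucc] at hsum
        exact eq_neg_of_add_eq_zero_left hsum
      calc (∑ j : Fin k, (inner (𝕜 := ℝ) ((v j.castSucc : E)) (w j)))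
          = ∑ j, ((inner (𝕜 := ℝ) ((v j.castSucc : E)) (u j))
              + (inner (𝕜 := ℝ) ((v j.castSucc : E)) z)) := by
            refine Finset.sum_congr rfl fun j _ => ?_
            rw [hw j, inner_add_right]
        _ = (∑ j : Fin k, (inner (𝕜 := ℝ) ((v j.castSucc : E)) (u j)))
              + ∑ j : Fin k, (inner (𝕜 := ℝ) ((v j.castSucc : E)) z) := Finset.sum_add_distrib
        _ = ∑ j : Fin k, (inner (𝕜 := ℝ) ((v j.castSucc : E)) z) := by
            rw [Finset.sum_eq_zero fun j _ => horth _ (u j) (hu j), zero_add]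
        _ = inner (𝕜 := ℝ) (∑ j : Fin k, (v j.castSucc : E)) z := by
            rw [sum_inner]
        _ = 0 := by
            rw [hlast, inner_neg_left, horth _ z hz, neg_zero]
    have hcast : ∀ j : Fin k, (v j.castSucc : E) = 0 := by
      intro j
      have := key (Pi.single j (v j.castSucc : E))
      rw [Fintype.sum_eq_single j ?_] at this
      · simpa using this
      · intro i hij
        simp [Pi.single_apply, hij]
    intro i
    induction i using Fin.lastCases with
    | last =>
      rw [Fin.sum_univ_castSucc] at hsum
      rw [Finset.sum_congr rfl fun j _ => hcast j] at hsum
      simpa using hsum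
    | cast j => exact hcast j
end

section
/- Whether subspaces V₁, ..., V_m of a finite-dimensional vector space V are strongly transverse does not depend on the choice of inner product on V: if they are strongly transverse with respect to one inner product, they are strongly transverse with respect to any other inner product. -/
/-- Strong transversality of subspaces with respect to a bilinear form `B`:
the only way to write `0` as a sum of vectors orthogonal (w.r.t. `B`) to the
respective subspaces is the trivial one. -/
def StronglyTransverse {V : Type*} [AddCommGroup V] [Module ℝ V]
    (B : V →ₗ[ℝ] V →ₗ[ℝ] ℝ) (m : ℕ) (W : Fin m → Submodule ℝ V) : Prop :=
  ∀ v : Fin m → V, (∀ i, ∀ u ∈ W i, B (v i) u = 0) →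
    (∑ i, v i) = 0 → ∀ i, v i = 0

section Aux

/-- In a finite-dimensional real inner product space, the "strong transversality" condition
is equivalent to a purely dimension-theoretic condition. -/
lemma aux_inner_st_iff {E : Type*} [NormedAddCommGroup E] [InnerProductSpace ℝ E]
    [FiniteDimensional ℝ E] (m : ℕ) (W : Fin m → Submodule ℝ E) :
    (∀ v : Fin m → E, (∀ i, v i ∈ (W i)ᗮ) → (∑ i, v i) = 0 → ∀ i, v i = 0) ↔
      ∑ i, (Module.finrank ℝ E - Module.finrank ℝ (W i)) =
        Module.finrank ℝ E - Module.finrank ℝ (⨅ i, W i : Submodule ℝ E) := by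
  classical
  -- the summing map
  let L : (∀ i, (W i)ᗮ) →ₗ[ℝ] E :=
    { toFun := fun f => ∑ i, (f i : E)
      map_add' := fun f g => by simp [Finset.sum_add_distrib]
      map_smul' := fun r f => by simp [Finset.smul_sum] }
  have hL : ∀ f : ∀ i, (W i)ᗮ, L f = ∑ i, (f i : E) := fun _ => rfl
  -- range of L is the sup of the (W i)ᗮ
  have hrange : LinearMap.range L = ⨆ i, (W i)ᗮ := by
    apply le_antisymm
    · rintro x ⟨f, rfl⟩
      rw [hL]
      exact Submodule.sum_mem _ fun i _ => Submodule.mem_iSup_of_mem i (f i).2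
    · refine iSup_le fun i x hx => ?_
      refine ⟨Pi.single i ⟨x, hx⟩, ?_⟩
      rw [hL, Finset.sum_eq_single i]
      · simp
      · intro j _ hj
        simp [Pi.single_eq_of_ne hj]
      · simp
  -- sup of orthogonals is orthogonal of inf
  have hsup : (⨆ i, (W i)ᗮ) = (⨅ i, W i)ᗮ := by
    have h1 : (⨆ i, (W i)ᗮ)ᗮ = ⨅ i, W i := by
      rw [← Submodule.iInf_orthogonal]
      exact iInf_congr fun i => Submodule.orthogonal_orthogonal (W i)
    rw [← h1, Submodule.orthogonal_orthogonal]
  have h2 : ∀ i, Module.finrank ℝ ((W i)ᗮ) =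
      Module.finrank ℝ E - Module.finrank ℝ (W i) := fun i => by
    have := (W i).finrank_add_finrank_orthogonal
    omega
  have h3 : Module.finrank ℝ ((⨅ i, W i)ᗮ : Submodule ℝ E)
      = Module.finrank ℝ E - Module.finrank ℝ (⨅ i, W i : Submodule ℝ E) := by
    have := (⨅ i, W i : Submodule ℝ E).finrank_add_finrank_orthogonal
    omega
  constructor
  · intro hst
    have hinj : Function.Injective L := by
      rw [← LinearMap.ker_eq_bot, Submodule.eq_bot_iff]
      intro f hf
      have := hst (fun i => (f i : E)) (fun i => (f i).2)
        (by rw [LinearMap.mem_ker, hL] at hf; exact hf)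
      funext i
      exact Subtype.ext (this i)
    have h1 : Module.finrank ℝ (∀ i, (W i)ᗮ) = Module.finrank ℝ (LinearMap.range L) :=
      (LinearMap.finrank_range_of_inj hinj).symm
    rw [Module.finrank_pi_fintype, hrange, hsup] at h1
    calc ∑ i, (Module.finrank ℝ E - Module.finrank ℝ (W i))
        = ∑ i, Module.finrank ℝ ((W i)ᗮ) := Finset.sum_congr rfl fun i _ => (h2 i).symm
      _ = Module.finrank ℝ ((⨅ i, W i)ᗮ : Submodule ℝ E) := h1
      _ = _ := h3
  · intro hdim
    have hdom : Module.finrank ℝ (∀ i, (W i)ᗮ) = Module.finrank ℝ (LinearMap.range L) := by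
      rw [Module.finrank_pi_fintype, hrange, hsup, h3, ← hdim]
      exact Finset.sum_congr rfl fun i _ => h2 i
    have hker : LinearMap.ker L = ⊥ := by
      have hrn := LinearMap.finrank_range_add_finrank_ker L
      rw [← Submodule.finrank_eq_zero (S := LinearMap.ker L)]
      omega
    intro v hv hsum i
    have hfk : (fun i => (⟨v i, hv i⟩ : (W i)ᗮ)) ∈ LinearMap.ker L := by
      rw [LinearMap.mem_ker, hL]
      exact hsum
    rw [hker, Submodule.mem_bot] at hfk
    have := congrFun hfk i
    simpa using congrArg Subtype.val this

/-- Strong transversality w.r.t. a symmetric positive definite bilinear form is equivalent to a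
purely dimension-theoretic condition, hence independent of the form. -/
lemma stronglyTransverse_iff_dim {V : Type*} [AddCommGroup V] [Module ℝ V]
    [FiniteDimensional ℝ V] (B : V →ₗ[ℝ] V →ₗ[ℝ] ℝ)
    (hsym : ∀ u v, B u v = B v u) (hpos : ∀ v, v ≠ 0 → 0 < B v v)
    (m : ℕ) (W : Fin m → Submodule ℝ V) :
    StronglyTransverse B m W ↔
      ∑ i, (Module.finrank ℝ V - Module.finrank ℝ (W i)) =
        Module.finrank ℝ V - Module.finrank ℝ (⨅ i, W i : Submodule ℝ V) := by
  letI c : InnerProductSpace.Core ℝ V :=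
    { inner := fun x y => B x y
      conj_inner_symm := fun x y => by simpa using hsym y x
      re_inner_nonneg := fun x => by
        rcases eq_or_ne x 0 with h | h
        · simp [h]
        · simpa using (hpos x h).le
      add_left := fun x y z => by simp
      smul_left := fun x y r => by simp
      definite := fun x hx => by
        by_contra h
        exact absurd hx (ne_of_gt (hpos x h)) }
  letI : NormedAddCommGroup V := c.toNormedAddCommGroup
  letI : InnerProductSpace ℝ V := InnerProductSpace.ofCore c.toCore
  have hmem : ∀ (x : V) (i : Fin m), x ∈ (W i)ᗮ ↔ ∀ u ∈ W i, B x u = 0 := by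
    intro x i
    constructor
    · intro hx u hu
      exact (hsym x u).trans (hx u hu)
    · intro hx u hu
      exact (hsym u x).trans (hx u hu)
  have key := aux_inner_st_iff m W
  have hcond : StronglyTransverse B m W ↔
      (∀ v : Fin m → V, (∀ i, v i ∈ (W i)ᗮ) → (∑ i, v i) = 0 → ∀ i, v i = 0) := by
    constructor
    · intro hst v hv
      exact hst v fun i => (hmem (v i) i).1 (hv i)
    · intro hst v hv
      exact hst v fun i => (hmem (v i) i).2 (hv i)
  exact hcond.trans key

end Aux

theorem stmt_8 {V : Type*} [AddCommGroup V] [Module ℝ V] [FiniteDimensional ℝ V]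
    (B₁ B₂ : V →ₗ[ℝ] V →ₗ[ℝ] ℝ)
    (h₁sym : ∀ u v, B₁ u v = B₁ v u) (h₂sym : ∀ u v, B₂ u v = B₂ v u)
    (h₁pos : ∀ v, v ≠ 0 → 0 < B₁ v v) (h₂pos : ∀ v, v ≠ 0 → 0 < B₂ v v)
    (m : ℕ) (W : Fin m → Submodule ℝ V)
    (h : StronglyTransverse B₁ m W) : StronglyTransverse B₂ m W := by
  rw [stronglyTransverse_iff_dim B₂ h₂sym h₂pos]
  rw [stronglyTransverse_iff_dim B₁ h₁sym h₁pos] at h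
  exact h
end
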